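/- The diagonal entries of the Jacobian at the q-singularities: with f1(x,y)=a10·x+a01·y, f2(x,y)=b10·x+b01·y and det A = a10·b01 - a01·b10, the Jacobian of X at q1 = ((a01/a10)·β, -β) is lower-triangularizable with eigenvalues f1(p1)·f1(p2)/a10 and β·det A/a10, where p1 = (-α,-β), p2 = (1-α,-β). In particular its determinant equals f1(p1)·f1(p2)·β·det A / a10². -/

import Mathlib

/-!
Both components of `X` have a factor vanishing at `q1`: the linear form `f1` in the first, and
`y + β` in the second. At a zero of one factor, the product rule leaves only the value of the
other factor times the derivative of the vanishing one. So `∂X₂/∂x = 0`, `∂X₁/∂x` is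
`a10 (x + α)(x + α - 1)` and `∂X₂/∂y` is `-f2` at `q1`. Since `f1(q1) = 0`, we have
`f1(-α, -β) = -a10 (x + α)` and `f1(1 - α, -β) = -a10 (x + α - 1)` there, where `x` is the first
coordinate of `q1`.
-/

open ContinuousLinearMap

section ProductAtZero

variable {𝕜 E 𝔸 : Type*} [NontriviallyNormedField 𝕜] [NormedAddCommGroup E] [NormedSpace 𝕜 E]
  [NormedCommRing 𝔸] [NormedAlgebra 𝕜 𝔸] {g h : E → 𝔸} {g' h' : E →L[𝕜] 𝔸} {p : E}

theorem HasFDerivAt.mul_of_left_eq_zero (hg : HasFDerivAt g g' p) (hh : HasFDerivAt h h' p)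
    (hg0 : g p = 0) : HasFDerivAt (fun x => g x * h x) (h p • g') p := by
  convert hg.fun_mul hh using 1
  ext v
  simp [hg0]

theorem HasFDerivAt.mul_of_right_eq_zero (hg : HasFDerivAt g g' p) (hh : HasFDerivAt h h' p)
    (hh0 : h p = 0) : HasFDerivAt (fun x => g x * h x) (g p • h') p := by
  convert hg.fun_mul hh using 1
  ext v
  simp [hh0]

end ProductAtZero

theorem hasFDerivAt_linearForm (a b : ℝ) (p : ℝ × ℝ) :
    HasFDerivAt (fun q : ℝ × ℝ => a * q.1 + b * q.2) (a • fst ℝ ℝ ℝ + b • snd ℝ ℝ ℝ) p :=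
  (hasFDerivAt_fst.const_mul a).add (hasFDerivAt_snd.const_mul b)

theorem hasFDerivAt_X_of_f1_eq_zero {α β a10 a01 b10 b01 : ℝ} {p : ℝ × ℝ}
    (hf1 : a10 * p.1 + a01 * p.2 = 0) (hy : p.2 + β = 0) :
    HasFDerivAt (fun q : ℝ × ℝ =>
        ((q.1 + α) * (q.1 + α - 1) * (a10 * q.1 + a01 * q.2),
         (q.2 + β) * (q.2 + β - 1) * (b10 * q.1 + b01 * q.2)))
      ((((p.1 + α) * (p.1 + α - 1)) • (a10 • fst ℝ ℝ ℝ + a01 • snd ℝ ℝ ℝ)).prod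
        ((b10 * p.1 + b01 * p.2) • (p.2 + β - 1) • snd ℝ ℝ ℝ)) p := by
  have hx_quad := ((hasFDerivAt_fst (𝕜 := ℝ) (p := p)).add_const α).fun_mul
    (((hasFDerivAt_fst (𝕜 := ℝ) (p := p)).add_const α).sub_const 1)
  have hy_quad : HasFDerivAt (fun q : ℝ × ℝ => (q.2 + β) * (q.2 + β - 1))
      ((p.2 + β - 1) • snd ℝ ℝ ℝ) p :=
    (hasFDerivAt_snd.add_const β).mul_of_left_eq_zero
      ((hasFDerivAt_snd.add_const β).sub_const 1) hy
  exact (hx_quad.mul_of_right_eq_zero (hasFDerivAt_linearForm a10 a01 p) hf1).prodMk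
    (hy_quad.mul_of_left_eq_zero (hasFDerivAt_linearForm b10 b01 p) (by rw [hy, zero_mul]))

/-- The Jacobian at the q-singularity `q1` is upper triangular with diagonal entries
`f1(p1)f1(p2)/a10` and `β·det A/a10`; in particular its determinant is
`f1(p1)f1(p2)·β·det A / a10²`. -/
theorem jacobian_at_q1
    (α β a10 a01 b10 b01 : ℝ)
    (ha10 : a10 ≠ 0)
    (X : ℝ × ℝ → ℝ × ℝ)
    (hX : ∀ p : ℝ × ℝ,
      X p = ((p.1 + α) * (p.1 + α - 1) * (a10 * p.1 + a01 * p.2),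
             (p.2 + β) * (p.2 + β - 1) * (b10 * p.1 + b01 * p.2)))
    (f1 : ℝ × ℝ → ℝ) (hf1 : ∀ p : ℝ × ℝ, f1 p = a10 * p.1 + a01 * p.2)
    (q1 : ℝ × ℝ) (hq1 : q1 = ((a01 / a10) * β, -β)) :
    ((fderiv ℝ X q1) (1, 0)).1 = f1 (-α, -β) * f1 (1 - α, -β) / a10 ∧
    ((fderiv ℝ X q1) (1, 0)).2 = 0 ∧
    ((fderiv ℝ X q1) (0, 1)).2 = β * (a10 * b01 - a01 * b10) / a10 ∧
    ((fderiv ℝ X q1) (1, 0)).1 * ((fderiv ℝ X q1) (0, 1)).2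
        - ((fderiv ℝ X q1) (0, 1)).1 * ((fderiv ℝ X q1) (1, 0)).2
      = f1 (-α, -β) * f1 (1 - α, -β) * β * (a10 * b01 - a01 * b10) / a10 ^ 2 := by
  obtain rfl := funext hX
  have hf1q : a10 * q1.1 + a01 * q1.2 = 0 := by
    rw [hq1]; field_simp; ring
  have hyq : q1.2 + β = 0 := by rw [hq1]; ring
  rw [(hasFDerivAt_X_of_f1_eq_zero (b10 := b10) (b01 := b01) hf1q hyq).fderiv]
  simp only [prod_apply, smul_apply, add_apply, coe_fst', coe_snd', smul_eq_mul, hf1, hq1]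
  refine ⟨?_, by ring, ?_, ?_⟩ <;> field_simp <;> ring
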